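/- arXiv:1808.10007 — 5 statements merged into one kernel-verified Lean document; each statement's English description precedes it below -/
import Mathlib

section
/- (Soundness of Km) For every set Γ of modal formulas and every modal formula α, if Γ ⊢_Km α then Γ ⊨_Km α; that is, every Km-valuation over the eight-valued Nmatrix M_Km that assigns designated values to all formulas of Γ also assigns a designated value to α. -/
/- ## Syntax of the modal language -/

inductive Form : Type
  | var : Nat → Form
  | neg : Form → Form
  | imp : Form → Form → Form
  | box : Form → Form
  deriving DecidableEq

namespace Form
/-- ◇α := ¬□¬α -/
def dia (α : Form) : Form := neg (box (neg α))
/-- α∨β := ¬α→β -/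
def disj (α β : Form) : Form := imp (neg α) β
/-- α∧β := ¬(α→¬β) -/
def conj (α β : Form) : Form := neg (imp α (neg β))
end Form

open Form

/-- Substitution instances of classical tautologies over {¬,→}: formulas true under
every Boolean assignment that respects negation and implication. -/
def Taut (φ : Form) : Prop :=
  ∀ v : Form → Bool,
    (∀ α, v (Form.neg α) = !(v α)) →
    (∀ α β, v (Form.imp α β) = (!(v α) || v β)) →
    v φ = true

/-- Hilbert-style derivations from a set of premises, with Modus Ponens as the only
inference rule, given a set `Ax` of axioms. -/
inductive Deriv (Ax : Form → Prop) (Γ : Set Form) : Form → Prop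
  | prem {φ : Form} : φ ∈ Γ → Deriv Ax Γ φ
  | ax {φ : Form} : Ax φ → Deriv Ax Γ φ
  | mp {φ ψ : Form} : Deriv Ax Γ (Form.imp φ ψ) → Deriv Ax Γ φ → Deriv Ax Γ ψ

/- ## Axiom schemas -/

def axK (α β : Form) : Form := (box (α.imp β)).imp ((box α).imp (box β))
def axK1 (α β : Form) : Form := (box (α.imp β)).imp ((dia α).imp (dia β))
def axK2 (α β : Form) : Form := (dia (α.imp β)).imp ((box α).imp (dia β))
def axM1 (α β : Form) : Form := (Form.neg (dia α)).imp (box (α.imp β))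
def axM2 (α β : Form) : Form := (box β).imp (box (α.imp β))
def axM3 (α β : Form) : Form := (dia β).imp (dia (α.imp β))
def axM4 (α β : Form) : Form := (dia (Form.neg α)).imp (dia (α.imp β))
def axT (α : Form) : Form := (box α).imp α
def axD (α : Form) : Form := (box α).imp (dia α)
def axDN1 (α : Form) : Form := (box α).imp (box (Form.neg (Form.neg α)))
def axDN2 (α : Form) : Form := (box (Form.neg (Form.neg α))).imp (box α)
def ax4 (α : Form) : Form := (box α).imp (box (box α))
def ax5 (α : Form) : Form := (dia (box α)).imp (box α)
def axKdet (α β : Form) : Form := (box (α.imp β)).imp ((dia α).imp (box β))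

def axK' (α β : Form) : Form := (dia α).imp (axK α β)
def axK1' (α β : Form) : Form := (dia (Form.neg β)).imp (axK1 α β)
def axK2' (α β : Form) : Form := (dia α).imp (axK2 α β)
def axM3' (α β : Form) : Form := ((dia α).disj (dia (Form.neg α))).imp (axM3 α β)
def axM4' (α β : Form) : Form := (dia (Form.neg β)).imp (axM4 α β)
def axI1 (α β : Form) : Form :=
  ((box α).conj (box (Form.neg α))).imp ((box (α.imp β)).conj (box (Form.neg (α.imp β))))
def axI2 (α β : Form) : Form :=
  ((box β).conj (box (Form.neg β))).imp ((box (α.imp β)).conj (box (Form.neg (α.imp β))))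

/-- The recovery operator ∘α := □α→◇α. -/
def circm (α : Form) : Form := (box α).imp (dia α)
/-- •α := ¬∘α. -/
def bulm (α : Form) : Form := Form.neg (circm α)
/-- The recovery operator ∘'α := (□α→α)∧(□¬α→¬α). -/
def circm' (α : Form) : Form :=
  ((box α).imp α).conj ((box (Form.neg α)).imp (Form.neg α))

/- ## Hilbert calculi -/

/-- The system Km. -/
inductive KmAx : Form → Prop
  | pc {φ : Form} : Taut φ → KmAx φ
  | k' (α β : Form) : KmAx (axK' α β)
  | k1' (α β : Form) : KmAx (axK1' α β)
  | k2' (α β : Form) : KmAx (axK2' α β)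
  | m1 (α β : Form) : KmAx (axM1 α β)
  | m2 (α β : Form) : KmAx (axM2 α β)
  | m3' (α β : Form) : KmAx (axM3' α β)
  | m4' (α β : Form) : KmAx (axM4' α β)
  | i1 (α β : Form) : KmAx (axI1 α β)
  | i2 (α β : Form) : KmAx (axI2 α β)
  | dn1 (α : Form) : KmAx (axDN1 α)
  | dn2 (α : Form) : KmAx (axDN2 α)

/-- The system K4m = Km + (4). -/
inductive K4mAx : Form → Prop
  | km {φ : Form} : KmAx φ → K4mAx φ
  | four (α : Form) : K4mAx (ax4 α)

/-- The system K45m = Km + (4) + (5). -/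
inductive K45mAx : Form → Prop
  | km {φ : Form} : KmAx φ → K45mAx φ
  | four (α : Form) : K45mAx (ax4 α)
  | five (α : Form) : K45mAx (ax5 α)

/-- The system Dm. -/
inductive DmAx : Form → Prop
  | pc {φ : Form} : Taut φ → DmAx φ
  | k (α β : Form) : DmAx (axK α β)
  | k1 (α β : Form) : DmAx (axK1 α β)
  | k2 (α β : Form) : DmAx (axK2 α β)
  | m1 (α β : Form) : DmAx (axM1 α β)
  | m2 (α β : Form) : DmAx (axM2 α β)
  | m3 (α β : Form) : DmAx (axM3 α β)
  | m4 (α β : Form) : DmAx (axM4 α β)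
  | d (α : Form) : DmAx (axD α)
  | dn1 (α : Form) : DmAx (axDN1 α)
  | dn2 (α : Form) : DmAx (axDN2 α)

/-- The system Tm. -/
inductive TmAx : Form → Prop
  | pc {φ : Form} : Taut φ → TmAx φ
  | k (α β : Form) : TmAx (axK α β)
  | k1 (α β : Form) : TmAx (axK1 α β)
  | k2 (α β : Form) : TmAx (axK2 α β)
  | m1 (α β : Form) : TmAx (axM1 α β)
  | m2 (α β : Form) : TmAx (axM2 α β)
  | m3 (α β : Form) : TmAx (axM3 α β)
  | m4 (α β : Form) : TmAx (axM4 α β)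
  | t (α : Form) : TmAx (axT α)
  | dn1 (α : Form) : TmAx (axDN1 α)
  | dn2 (α : Form) : TmAx (axDN2 α)

/-- The system T45m = Tm + (4) + (5). -/
inductive T45mAx : Form → Prop
  | tm {φ : Form} : TmAx φ → T45mAx φ
  | four (α : Form) : T45mAx (ax4 α)
  | five (α : Form) : T45mAx (ax5 α)

/-- The system Tmd: Tm with (K1) replaced by (Kdet). -/
inductive TmdAx : Form → Prop
  | pc {φ : Form} : Taut φ → TmdAx φ
  | k (α β : Form) : TmdAx (axK α β)
  | kdet (α β : Form) : TmdAx (axKdet α β)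
  | k2 (α β : Form) : TmdAx (axK2 α β)
  | m1 (α β : Form) : TmdAx (axM1 α β)
  | m2 (α β : Form) : TmdAx (axM2 α β)
  | m3 (α β : Form) : TmdAx (axM3 α β)
  | m4 (α β : Form) : TmdAx (axM4 α β)
  | t (α : Form) : TmdAx (axT α)
  | dn1 (α : Form) : TmdAx (axDN1 α)
  | dn2 (α : Form) : TmdAx (axDN2 α)

/-- The system Tm4d = Tmd + (4). -/
inductive Tm4dAx : Form → Prop
  | tmd {φ : Form} : TmdAx φ → Tm4dAx φ
  | four (α : Form) : Tm4dAx (ax4 α)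

/-- The system Tm + (Kdet). -/
inductive TmKdetAx : Form → Prop
  | tm {φ : Form} : TmAx φ → TmKdetAx φ
  | kdet (α β : Form) : TmKdetAx (axKdet α β)

/-- The system Km∘. -/
inductive KmCircAx : Form → Prop
  | pc {φ : Form} : Taut φ → KmCircAx φ
  | k'' (α β : Form) : KmCircAx ((circm α).imp (axK α β))
  | k1'' (α β : Form) : KmCircAx ((circm β).imp (axK1 α β))
  | k2'' (α β : Form) : KmCircAx ((circm α).imp (axK2 α β))
  | m1 (α β : Form) : KmCircAx (axM1 α β)
  | m2 (α β : Form) : KmCircAx (axM2 α β)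
  | m3'' (α β : Form) : KmCircAx ((circm α).imp (axM3 α β))
  | m4'' (α β : Form) : KmCircAx ((circm β).imp (axM4 α β))
  | i1' (α β : Form) : KmCircAx ((bulm α).imp (bulm (α.imp β)))
  | i2' (α β : Form) : KmCircAx ((bulm β).imp (bulm (α.imp β)))
  | dn1 (α : Form) : KmCircAx (axDN1 α)
  | dn2 (α : Form) : KmCircAx (axDN2 α)

/- ## The eight-valued non-deterministic semantics -/

/-- The modal "letters" T, C, F, I. -/
inductive Ltr : Type
  | T | C | F | I
  deriving DecidableEq

/-- An eight-valued truth-value: a letter together with a sign (`true` = +). -/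
structure V8 where
  ltr : Ltr
  sgn : Bool
  deriving DecidableEq

/-- Designated values: those with sign +. -/
def V8.desig (x : V8) : Prop := x.sgn = true

/-- Letter of the negation. -/
def lneg : Ltr → Ltr
  | .T => .F
  | .C => .C
  | .F => .T
  | .I => .I

/-- The (deterministic) multioperator for ¬. -/
def neg8 (x : V8) : Set V8 := {⟨lneg x.ltr, !x.sgn⟩}

/-- Set of possible letters of an implication, given the letters of the components. -/
def limp : Ltr → Ltr → Set Ltr
  | .I, _ => {Ltr.I}
  | .T, .I => {Ltr.I}
  | .C, .I => {Ltr.I}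
  | .F, .I => {Ltr.I}
  | .T, .T => {Ltr.T}
  | .T, .C => {Ltr.C}
  | .T, .F => {Ltr.F}
  | .C, .T => {Ltr.T}
  | .C, .C => {Ltr.T, Ltr.C}
  | .C, .F => {Ltr.C}
  | .F, .T => {Ltr.T}
  | .F, .C => {Ltr.T}
  | .F, .F => {Ltr.T}

/-- The multioperator for →: sign is material implication of the signs, letter as in `limp`. -/
def imp8 (x y : V8) : Set V8 :=
  { z | z.ltr ∈ limp x.ltr y.ltr ∧ z.sgn = (!x.sgn || y.sgn) }

/-- The multioperator for □ in (the Nmatrix for) Km. -/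
def box8Km (x : V8) : Set V8 :=
  if x.ltr = Ltr.T ∨ x.ltr = Ltr.I then { z | z.sgn = true } else { z | z.sgn = false }

/-- The multioperator for □ in the Nmatrix for K4m. -/
def box8K4m (x : V8) : Set V8 :=
  if x.ltr = Ltr.T ∨ x.ltr = Ltr.I then ({⟨Ltr.T, true⟩, ⟨Ltr.I, true⟩} : Set V8)
  else { z | z.sgn = false }

/-- The multioperator for □ in the Nmatrix for K45m. -/
def box8K45m (x : V8) : Set V8 :=
  if x.ltr = Ltr.T ∨ x.ltr = Ltr.I then ({⟨Ltr.T, true⟩, ⟨Ltr.I, true⟩} : Set V8)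
  else ({⟨Ltr.F, false⟩, ⟨Ltr.I, false⟩} : Set V8)

/-- A valuation over the eight-valued Nmatrix with the given □-multioperator. -/
def IsVal8 (boxOp : V8 → Set V8) (v : Form → V8) : Prop :=
  (∀ α, v (Form.neg α) ∈ neg8 (v α)) ∧
  (∀ α β, v (Form.imp α β) ∈ imp8 (v α) (v β)) ∧
  (∀ α, v (Form.box α) ∈ boxOp (v α))

/-- Semantic consequence over the eight-valued Nmatrix with the given □-multioperator. -/
def NmEntails (boxOp : V8 → Set V8) (Γ : Set Form) (φ : Form) : Prop :=
  ∀ v : Form → V8, IsVal8 boxOp v → (∀ γ ∈ Γ, (v γ).desig) → (v φ).desig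

/- ## Multialgebras -/

/-- A multialgebra over {¬,→,□}, presented on the carrier `V8` with a chosen domain. -/
structure MAlg where
  dom : Set V8
  negOp : V8 → Set V8
  impOp : V8 → V8 → Set V8
  boxOp : V8 → Set V8

/-- `A` is a submultialgebra of `B`. -/
def SubMAlg (A B : MAlg) : Prop :=
  A.dom ⊆ B.dom ∧
  (∀ x ∈ A.dom, A.negOp x ⊆ B.negOp x) ∧
  (∀ x ∈ A.dom, ∀ y ∈ A.dom, A.impOp x y ⊆ B.impOp x y) ∧
  (∀ x ∈ A.dom, A.boxOp x ⊆ B.boxOp x)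

/-- Domain of the Nmatrix for Dm: the six non-I values. -/
def domDm : Set V8 := { x | x.ltr ≠ Ltr.I }

/-- Domain of the Nmatrix for Tm: {T+, C+, C−, F−}. -/
def domTm : Set V8 :=
  ({⟨Ltr.T, true⟩, ⟨Ltr.C, true⟩, ⟨Ltr.C, false⟩, ⟨Ltr.F, false⟩} : Set V8)

/-- The multialgebra underlying the Nmatrix for Km. -/
def A_Km : MAlg := ⟨Set.univ, neg8, imp8, box8Km⟩

/-- The □-multioperator of Dm: T ↦ {T+,C+,F+}, C∪F ↦ {T−,C−,F−}. -/
def boxDm (x : V8) : Set V8 :=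
  if x.ltr = Ltr.T then { z | z.sgn = true } ∩ domDm else { z | z.sgn = false } ∩ domDm

/-- The multialgebra underlying the Nmatrix for Dm. -/
def A_Dm : MAlg :=
  ⟨domDm, fun x => neg8 x ∩ domDm, fun x y => imp8 x y ∩ domDm, boxDm⟩

/-- The □-multioperator of Tm: T+ ↦ {T+,C+}, and C+, C−, F− ↦ {C−,F−}. -/
def boxTm (x : V8) : Set V8 :=
  if x = ⟨Ltr.T, true⟩ then ({⟨Ltr.T, true⟩, ⟨Ltr.C, true⟩} : Set V8)
  else ({⟨Ltr.C, false⟩, ⟨Ltr.F, false⟩} : Set V8)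

/-- The multialgebra underlying the Nmatrix for Tm. -/
def A_Tm : MAlg :=
  ⟨domTm, fun x => neg8 x ∩ domTm, fun x y => imp8 x y ∩ domTm, boxTm⟩

/- ## The four-valued Nmatrix for Tmd -/

/-- The four values T+, C+, C−, F−. -/
inductive V4 : Type
  | Tp | Cp | Cm | Fm
  deriving DecidableEq

/-- Designated values of the Tmd Nmatrix: T+ and C+. -/
def V4.desig (x : V4) : Prop := x = V4.Tp ∨ x = V4.Cp

/-- Negation: deterministic. -/
def neg4 : V4 → V4
  | .Tp => .Fm
  | .Cp => .Cm
  | .Cm => .Cp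
  | .Fm => .Tp

/-- Position in the chain F− < C− < C+ < T+. -/
def rank4 : V4 → Nat
  | .Fm => 0
  | .Cm => 1
  | .Cp => 2
  | .Tp => 3

def ofRank4 : Nat → V4
  | 0 => .Fm
  | 1 => .Cm
  | 2 => .Cp
  | _ => .Tp

/-- The deterministic implication of Tmd: x→y is the maximum of ¬x and y in the chain. -/
def imp4 (x y : V4) : V4 := ofRank4 (max (rank4 (neg4 x)) (rank4 y))

/-- The □-multioperator of Tmd: T+ ↦ {T+,C+}; C+, C−, F− ↦ {C−,F−}. -/
def box4 (x : V4) : Set V4 :=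
  if x = V4.Tp then ({V4.Tp, V4.Cp} : Set V4) else ({V4.Cm, V4.Fm} : Set V4)

/-- A valuation over the Nmatrix for Tmd. -/
def IsVal4 (v : Form → V4) : Prop :=
  (∀ α, v (Form.neg α) = neg4 (v α)) ∧
  (∀ α β, v (Form.imp α β) = imp4 (v α) (v β)) ∧
  (∀ α, v (Form.box α) ∈ box4 (v α))

/-- Semantic consequence over the Nmatrix for Tmd. -/
def TmdEntails (Γ : Set Form) (φ : Form) : Prop :=
  ∀ v : Form → V4, IsVal4 v → (∀ γ ∈ Γ, (v γ).desig) → (v φ).desig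

/- ## Deterministic logical matrices -/

/-- A deterministic logical matrix over the signature {¬,→,□}. -/
structure DetMatrix where
  carrier : Type
  negOp : carrier → carrier
  impOp : carrier → carrier → carrier
  boxOp : carrier → carrier
  desig : Set carrier

/-- A valuation (homomorphism) over a deterministic matrix. -/
def DetMatrix.IsVal (Mat : DetMatrix) (h : Form → Mat.carrier) : Prop :=
  (∀ α, h (Form.neg α) = Mat.negOp (h α)) ∧
  (∀ α β, h (Form.imp α β) = Mat.impOp (h α) (h β)) ∧
  (∀ α, h (Form.box α) = Mat.boxOp (h α))

/-- Semantic consequence over a deterministic matrix. -/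
def DetMatrix.Entails (Mat : DetMatrix) (Γ : Set Form) (φ : Form) : Prop :=
  ∀ h : Form → Mat.carrier, Mat.IsVal h → (∀ γ ∈ Γ, h γ ∈ Mat.desig) → h φ ∈ Mat.desig

/-- Validity in a deterministic matrix. -/
def DetMatrix.Valid (Mat : DetMatrix) (φ : Form) : Prop :=
  ∀ h : Form → Mat.carrier, Mat.IsVal h → h φ ∈ Mat.desig

/- ## The Dugundji formulas δ(m) -/

/-- Left-associated disjunction of a nonempty list of formulas. -/
def bigOr : List Form → Form
  | [] => Form.var 0
  | a :: l => l.foldl Form.disj a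

/-- α(m): the left-associated disjunction of the variables p_1, …, p_m. -/
def alphaF (m : Nat) : Form := bigOr ((List.range m).map Form.var)

/-- β_i(m): the left-associated disjunction of p_1, …, p_m with p_i omitted. -/
def betaF (m i : Nat) : Form :=
  bigOr (((List.range m).filter (fun j => j != i)).map Form.var)

/-- δ(m): the left-associated disjunction of the formulas □α(m)→□β_i(m), 1 ≤ i ≤ m. -/
def deltaF (m : Nat) : Form :=
  bigOr ((List.range m).map (fun i => (Form.box (alphaF m)).imp (Form.box (betaF m i))))

/-- Sign of □x as a function of the letter of x, in the Km Nmatrix. -/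
def boxSgn : Ltr → Bool
  | .T => true
  | .I => true
  | .C => false
  | .F => false

lemma lneg_lneg (l : Ltr) : lneg (lneg l) = l := by cases l <;> rfl

/-- Soundness of Km with respect to the eight-valued Nmatrix M_Km. -/
theorem Km_soundness (Γ : Set Form) (α : Form) :
    Deriv KmAx Γ α → NmEntails box8Km Γ α := by
  intro h v hv hΓ
  obtain ⟨hn, hi, hb⟩ := hv
  have Hnv : ∀ γ, v (Form.neg γ) = ⟨lneg (v γ).ltr, !(v γ).sgn⟩ := by
    intro γ; have := hn γ; simpa [neg8] using this
  have Hns : ∀ γ, (v (Form.neg γ)).sgn = !(v γ).sgn := by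
    intro γ; rw [Hnv γ]
  have Hnl : ∀ γ, (v (Form.neg γ)).ltr = lneg (v γ).ltr := by
    intro γ; rw [Hnv γ]
  have His : ∀ γ δ, (v (Form.imp γ δ)).sgn = (!(v γ).sgn || (v δ).sgn) := by
    intro γ δ; exact (hi γ δ).2
  have Hil : ∀ γ δ, (v (Form.imp γ δ)).ltr ∈ limp (v γ).ltr (v δ).ltr := by
    intro γ δ; exact (hi γ δ).1
  have Hbs : ∀ γ, (v (Form.box γ)).sgn = boxSgn (v γ).ltr := by
    intro γ
    have := hb γ
    cases hγ : (v γ).ltr <;>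
      simp [box8Km, hγ, boxSgn] at this ⊢ <;> exact this
  induction h with
  | prem hφ => exact hΓ _ hφ
  | @mp φ ψ _ _ ih1 ih2 =>
    have h1 : (!(v φ).sgn || (v ψ).sgn) = true := by
      have h := ih1; unfold V8.desig at h; rw [His] at h; exact h
    have h2 : (v φ).sgn = true := ih2
    show (v ψ).sgn = true
    simpa [h2] using h1
  | ax hφ =>
    show (v _).sgn = true
    cases hφ with
    | pc ht => exact ht (fun φ => (v φ).sgn) Hns His
    | k' a b =>
      have hm := Hil a b
      simp only [axK', axK, Form.dia, His, Hns, Hbs, Hnl]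
      revert hm
      generalize (v (a.imp b)).ltr = lc
      generalize (v a).ltr = la
      generalize (v b).ltr = lb
      clear Hnv Hns Hnl His Hil Hbs hn hi hb hΓ
      intro hm
      cases la <;> cases lb <;> cases lc <;>
        simp only [limp, lneg, boxSgn, Set.mem_singleton_iff, Set.mem_insert_iff,
          reduceCtorEq, or_self, or_false, false_or, or_true, true_or] at hm ⊢ <;>
        rfl
    | k1' a b =>
      have hm := Hil a b
      simp only [axK1', axK1, Form.dia, His, Hns, Hbs, Hnl]
      revert hm
      generalize (v (a.imp b)).ltr = lc
      generalize (v a).ltr = la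
      generalize (v b).ltr = lb
      clear Hnv Hns Hnl His Hil Hbs hn hi hb hΓ
      intro hm
      cases la <;> cases lb <;> cases lc <;>
        simp only [limp, lneg, boxSgn, Set.mem_singleton_iff, Set.mem_insert_iff,
          reduceCtorEq, or_self, or_false, false_or, or_true, true_or] at hm ⊢ <;>
        rfl
    | k2' a b =>
      have hm := Hil a b
      simp only [axK2', axK2, Form.dia, His, Hns, Hbs, Hnl]
      revert hm
      generalize (v (a.imp b)).ltr = lc
      generalize (v a).ltr = la
      generalize (v b).ltr = lb
      clear Hnv Hns Hnl His Hil Hbs hn hi hb hΓ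
      intro hm
      cases la <;> cases lb <;> cases lc <;>
        simp only [limp, lneg, boxSgn, Set.mem_singleton_iff, Set.mem_insert_iff,
          reduceCtorEq, or_self, or_false, false_or, or_true, true_or] at hm ⊢ <;>
        rfl
    | m1 a b =>
      have hm := Hil a b
      simp only [axM1, Form.dia, His, Hns, Hbs, Hnl]
      revert hm
      generalize (v (a.imp b)).ltr = lc
      generalize (v a).ltr = la
      generalize (v b).ltr = lb
      clear Hnv Hns Hnl His Hil Hbs hn hi hb hΓ
      intro hm
      cases la <;> cases lb <;> cases lc <;>
        simp only [limp, lneg, boxSgn, Set.mem_singleton_iff, Set.mem_insert_iff,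
          reduceCtorEq, or_self, or_false, false_or, or_true, true_or] at hm ⊢ <;>
        rfl
    | m2 a b =>
      have hm := Hil a b
      simp only [axM2, His, Hns, Hbs, Hnl]
      revert hm
      generalize (v (a.imp b)).ltr = lc
      generalize (v a).ltr = la
      generalize (v b).ltr = lb
      clear Hnv Hns Hnl His Hil Hbs hn hi hb hΓ
      intro hm
      cases la <;> cases lb <;> cases lc <;>
        simp only [limp, lneg, boxSgn, Set.mem_singleton_iff, Set.mem_insert_iff,
          reduceCtorEq, or_self, or_false, false_or, or_true, true_or] at hm ⊢ <;>
        rfl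
    | m3' a b =>
      have hm := Hil a b
      simp only [axM3', axM3, Form.dia, Form.disj, His, Hns, Hbs, Hnl]
      revert hm
      generalize (v (a.imp b)).ltr = lc
      generalize (v a).ltr = la
      generalize (v b).ltr = lb
      clear Hnv Hns Hnl His Hil Hbs hn hi hb hΓ
      intro hm
      cases la <;> cases lb <;> cases lc <;>
        simp only [limp, lneg, boxSgn, Set.mem_singleton_iff, Set.mem_insert_iff,
          reduceCtorEq, or_self, or_false, false_or, or_true, true_or] at hm ⊢ <;>
        rfl
    | m4' a b =>
      have hm := Hil a b
      simp only [axM4', axM4, Form.dia, His, Hns, Hbs, Hnl]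
      revert hm
      generalize (v (a.imp b)).ltr = lc
      generalize (v a).ltr = la
      generalize (v b).ltr = lb
      clear Hnv Hns Hnl His Hil Hbs hn hi hb hΓ
      intro hm
      cases la <;> cases lb <;> cases lc <;>
        simp only [limp, lneg, boxSgn, Set.mem_singleton_iff, Set.mem_insert_iff,
          reduceCtorEq, or_self, or_false, false_or, or_true, true_or] at hm ⊢ <;>
        rfl
    | i1 a b =>
      have hm := Hil a b
      simp only [axI1, Form.conj, His, Hns, Hbs, Hnl, Bool.not_or, Bool.not_not]
      revert hm
      generalize (v (a.imp b)).ltr = lc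
      generalize (v a).ltr = la
      generalize (v b).ltr = lb
      clear Hnv Hns Hnl His Hil Hbs hn hi hb hΓ
      intro hm
      cases la <;> cases lb <;> cases lc <;>
        simp only [limp, lneg, boxSgn, Set.mem_singleton_iff, Set.mem_insert_iff,
          reduceCtorEq, or_self, or_false, false_or, or_true, true_or] at hm ⊢ <;>
        rfl
    | i2 a b =>
      have hm := Hil a b
      simp only [axI2, Form.conj, His, Hns, Hbs, Hnl, Bool.not_or, Bool.not_not]
      revert hm
      generalize (v (a.imp b)).ltr = lc
      generalize (v a).ltr = la
      generalize (v b).ltr = lb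
      clear Hnv Hns Hnl His Hil Hbs hn hi hb hΓ
      intro hm
      cases la <;> cases lb <;> cases lc <;>
        simp only [limp, lneg, boxSgn, Set.mem_singleton_iff, Set.mem_insert_iff,
          reduceCtorEq, or_self, or_false, false_or, or_true, true_or] at hm ⊢ <;>
        rfl
    | dn1 a =>
      simp only [axDN1, His, Hbs, Hnl, lneg_lneg]
      simp
    | dn2 a =>
      simp only [axDN2, His, Hbs, Hnl, lneg_lneg]
      simp
end

section
/- For all modal formulas α and β, the following derivabilities hold in Km: (i) □α, ◇α, ◇¬β ⊢_Km ◇¬(α→β); (ii) ◇α, □¬β, ◇¬β ⊢_Km ◇¬(α→β); (iii) □α, ◇α, □¬β ⊢_Km □¬(α→β); (iv) ◇α, ◇β ⊢_Km ◇(α→β); (v) ◇¬α, ◇β ⊢_Km ◇(α→β); (vi) ◇¬α, ◇¬β ⊢_Km ◇(α→β). -/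
open Form

/-- Lemma B: six derivabilities in Km. -/
theorem Km_lemmaB (α β : Form) :
    Deriv KmAx {Form.box α, dia α, dia (Form.neg β)} (dia (Form.neg (α.imp β))) ∧
    Deriv KmAx {dia α, Form.box (Form.neg β), dia (Form.neg β)} (dia (Form.neg (α.imp β))) ∧
    Deriv KmAx {Form.box α, dia α, Form.box (Form.neg β)} (Form.box (Form.neg (α.imp β))) ∧
    Deriv KmAx {dia α, dia β} (dia (α.imp β)) ∧
    Deriv KmAx {dia (Form.neg α), dia β} (dia (α.imp β)) ∧
    Deriv KmAx {dia (Form.neg α), dia (Form.neg β)} (dia (α.imp β)) := by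
  have dt : ∀ {Γ : Set Form} {φ : Form}, Taut φ → Deriv KmAx Γ φ :=
    fun h => Deriv.ax (KmAx.pc h)
  refine ⟨?_, ?_, ?_, ?_, ?_, ?_⟩
  · -- □α, ◇α, ◇¬β ⊢ ◇¬(α→β)
    have t : Taut ((axK' α β).imp ((axDN1 β).imp ((axDN2 (α.imp β)).imp
        ((box α).imp ((dia α).imp ((dia (Form.neg β)).imp
          (dia (Form.neg (α.imp β))))))))) := by
      intro v hn hi
      simp only [axK', axK, axDN1, axDN2, Form.dia, hn, hi]
      cases h1 : v (Form.box (α.imp β)) <;>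
      cases h2 : v (Form.box α) <;>
      cases h3 : v (Form.box (Form.neg α)) <;>
      cases h4 : v (Form.box β) <;>
      cases h5 : v (Form.box (Form.neg (Form.neg β))) <;>
      cases h6 : v (Form.box (Form.neg (Form.neg (α.imp β)))) <;> simp
    exact ((((((dt t).mp (Deriv.ax (KmAx.k' α β))).mp
      (Deriv.ax (KmAx.dn1 β))).mp (Deriv.ax (KmAx.dn2 (α.imp β)))).mp
      (Deriv.prem (by simp))).mp (Deriv.prem (by simp))).mp (Deriv.prem (by simp))
  · -- ◇α, □¬β, ◇¬β ⊢ ◇¬(α→β)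
    have t : Taut ((axK1' α β).imp ((axDN2 (α.imp β)).imp
        ((dia α).imp ((box (Form.neg β)).imp ((dia (Form.neg β)).imp
          (dia (Form.neg (α.imp β)))))))) := by
      intro v hn hi
      simp only [axK1', axK1, axDN2, Form.dia, hn, hi]
      cases h1 : v (Form.box (α.imp β)) <;>
      cases h2 : v (Form.box (Form.neg α)) <;>
      cases h3 : v (Form.box (Form.neg β)) <;>
      cases h4 : v (Form.box (Form.neg (Form.neg β))) <;>
      cases h5 : v (Form.box (Form.neg (Form.neg (α.imp β)))) <;> simp
    exact (((((dt t).mp (Deriv.ax (KmAx.k1' α β))).mp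
      (Deriv.ax (KmAx.dn2 (α.imp β)))).mp (Deriv.prem (by simp))).mp
      (Deriv.prem (by simp))).mp (Deriv.prem (by simp))
  · -- □α, ◇α, □¬β ⊢ □¬(α→β)
    have t : Taut ((axK2' α β).imp ((dia α).imp ((box α).imp
        ((box (Form.neg β)).imp (box (Form.neg (α.imp β))))))) := by
      intro v hn hi
      simp only [axK2', axK2, Form.dia, hn, hi]
      cases h1 : v (Form.box α) <;>
      cases h2 : v (Form.box (Form.neg α)) <;>
      cases h3 : v (Form.box (Form.neg β)) <;>
      cases h4 : v (Form.box (Form.neg (α.imp β))) <;> simp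
    exact ((((dt t).mp (Deriv.ax (KmAx.k2' α β))).mp
      (Deriv.prem (by simp))).mp (Deriv.prem (by simp))).mp (Deriv.prem (by simp))
  · -- ◇α, ◇β ⊢ ◇(α→β)
    have t : Taut ((axM3' α β).imp ((dia α).imp ((dia β).imp (dia (α.imp β))))) := by
      intro v hn hi
      simp only [axM3', axM3, Form.dia, Form.disj, hn, hi]
      cases h1 : v (Form.box (Form.neg α)) <;>
      cases h2 : v (Form.box (Form.neg (Form.neg α))) <;>
      cases h3 : v (Form.box (Form.neg β)) <;>
      cases h4 : v (Form.box (Form.neg (α.imp β))) <;> simp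
    exact (((dt t).mp (Deriv.ax (KmAx.m3' α β))).mp
      (Deriv.prem (by simp))).mp (Deriv.prem (by simp))
  · -- ◇¬α, ◇β ⊢ ◇(α→β)
    have t : Taut ((axM3' α β).imp ((dia (Form.neg α)).imp
        ((dia β).imp (dia (α.imp β))))) := by
      intro v hn hi
      simp only [axM3', axM3, Form.dia, Form.disj, hn, hi]
      cases h1 : v (Form.box (Form.neg α)) <;>
      cases h2 : v (Form.box (Form.neg (Form.neg α))) <;>
      cases h3 : v (Form.box (Form.neg β)) <;>
      cases h4 : v (Form.box (Form.neg (α.imp β))) <;> simp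
    exact (((dt t).mp (Deriv.ax (KmAx.m3' α β))).mp
      (Deriv.prem (by simp))).mp (Deriv.prem (by simp))
  · -- ◇¬α, ◇¬β ⊢ ◇(α→β)
    exact ((Deriv.ax (KmAx.m4' α β)).mp (Deriv.prem (by simp))).mp
      (Deriv.prem (by simp))
end

section
/- Let Δ be a set of modal formulas which is φ-saturated in Km for some formula φ. Then the canonical valuation V_Δ is well defined (for each formula α exactly one of the eight truth-values satisfies the defining clauses), V_Δ is a Km-valuation over the Nmatrix M_Km, and for every formula α: V_Δ(α) is designated if and only if α ∈ Δ. -/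
open Form

/-- Δ is maximal non-trivial with respect to φ (φ-saturated) in the logic given by `Ax`. -/
def Saturated (Ax : Form → Prop) (Δ : Set Form) (φ : Form) : Prop :=
  ¬ Deriv Ax Δ φ ∧ ∀ ψ : Form, ψ ∉ Δ → Deriv Ax (insert ψ Δ) φ

/-- The defining clauses of the canonical valuation V_Δ at formula α and value x. -/
def CanonSpec (Δ : Set Form) (α : Form) (x : V8) : Prop :=
  (x.sgn = true ↔ α ∈ Δ) ∧
  (x.sgn = false ↔ Form.neg α ∈ Δ) ∧
  (x.ltr = Ltr.T ↔ (Form.box α ∈ Δ ∧ dia α ∈ Δ)) ∧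
  (x.ltr = Ltr.C ↔ (dia α ∈ Δ ∧ dia (Form.neg α) ∈ Δ)) ∧
  (x.ltr = Ltr.F ↔ (Form.box (Form.neg α) ∈ Δ ∧ dia (Form.neg α) ∈ Δ)) ∧
  (x.ltr = Ltr.I ↔ (Form.box α ∈ Δ ∧ Form.box (Form.neg α) ∈ Δ))

/- ## Auxiliary lemmas for the canonical valuation -/

section CanonAux

open Form

/- ### Tautologies -/

private lemma km_t_id (α : Form) : Taut (α.imp α) := by
  intro v hn hi; simp only [hi]; cases v α <;> rfl

private lemma km_t_s (α β : Form) : Taut (α.imp (β.imp α)) := by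
  intro v hn hi; simp only [hi]; cases v α <;> cases v β <;> rfl

private lemma km_t_k (α β γ : Form) :
    Taut ((α.imp (β.imp γ)).imp ((α.imp β).imp (α.imp γ))) := by
  intro v hn hi; simp only [hi]; cases v α <;> cases v β <;> cases v γ <;> rfl

private lemma km_t_exf (α β : Form) : Taut (α.imp ((Form.neg α).imp β)) := by
  intro v hn hi; simp only [hi, hn]; cases v α <;> cases v β <;> rfl

private lemma km_t_exf2 (α β : Form) : Taut ((Form.neg α).imp (α.imp β)) := by
  intro v hn hi; simp only [hi, hn]; cases v α <;> cases v β <;> rfl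

private lemma km_t_cases (α β : Form) :
    Taut ((α.imp β).imp (((Form.neg α).imp β).imp β)) := by
  intro v hn hi; simp only [hi, hn]; cases v α <;> cases v β <;> rfl

/- ### Basic derivability facts -/

private lemma km_deriv_cut {Ax : Form → Prop} {Γ : Set Form} {ψ χ : Form}
    (h1 : Deriv Ax Γ ψ) (h2 : Deriv Ax (insert ψ Γ) χ) : Deriv Ax Γ χ := by
  induction h2 with
  | prem h =>
    rcases Set.mem_insert_iff.1 h with rfl | h
    · exact h1
    · exact .prem h
  | ax h => exact .ax h
  | mp _ _ ih1 ih2 => exact .mp ih1 ih2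

private lemma km_deduction {Γ : Set Form} {ψ χ : Form}
    (h : Deriv KmAx (insert ψ Γ) χ) : Deriv KmAx Γ (ψ.imp χ) := by
  induction h with
  | @prem χ h =>
    rcases Set.mem_insert_iff.1 h with rfl | h
    · exact .ax (.pc (km_t_id χ))
    · exact .mp (.ax (.pc (km_t_s χ ψ))) (.prem h)
  | @ax χ h => exact .mp (.ax (.pc (km_t_s χ ψ))) (.ax h)
  | @mp χ₁ χ₂ _ _ ih1 ih2 => exact .mp (.mp (.ax (.pc (km_t_k ψ χ₁ χ₂))) ih1) ih2

variable {Δ : Set Form} {φ : Form}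

private lemma km_mem_of_deriv (hΔ : Saturated KmAx Δ φ) {ψ : Form}
    (h : Deriv KmAx Δ ψ) : ψ ∈ Δ := by
  by_contra hm
  exact hΔ.1 (km_deriv_cut h (hΔ.2 ψ hm))

private lemma km_mp_mem (hΔ : Saturated KmAx Δ φ) {ψ χ : Form}
    (h1 : ψ.imp χ ∈ Δ) (h2 : ψ ∈ Δ) : χ ∈ Δ :=
  km_mem_of_deriv hΔ (.mp (.prem h1) (.prem h2))

private lemma km_neg_mem_iff (hΔ : Saturated KmAx Δ φ) {ψ : Form} :
    Form.neg ψ ∈ Δ ↔ ψ ∉ Δ := by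
  constructor
  · intro h1 h2
    exact hΔ.1 (.mp (.mp (.ax (.pc (km_t_exf ψ φ))) (.prem h2)) (.prem h1))
  · intro h2
    by_contra h1
    have d1 : Deriv KmAx Δ (ψ.imp φ) := km_deduction (hΔ.2 ψ h2)
    have d2 : Deriv KmAx Δ ((Form.neg ψ).imp φ) := km_deduction (hΔ.2 _ h1)
    exact hΔ.1 (.mp (.mp (.ax (.pc (km_t_cases ψ φ))) d1) d2)

private lemma km_imp_mem_iff (hΔ : Saturated KmAx Δ φ) {α β : Form} :
    α.imp β ∈ Δ ↔ (α ∉ Δ ∨ β ∈ Δ) := by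
  constructor
  · intro h
    by_cases hα : α ∈ Δ
    · exact Or.inr (km_mp_mem hΔ h hα)
    · exact Or.inl hα
  · rintro (hα | hβ)
    · have hn : Form.neg α ∈ Δ := (km_neg_mem_iff hΔ).2 hα
      exact km_mem_of_deriv hΔ (.mp (.ax (.pc (km_t_exf2 α β))) (.prem hn))
    · exact km_mem_of_deriv hΔ (.mp (.ax (.pc (km_t_s β α))) (.prem hβ))

private lemma km_box_dn (hΔ : Saturated KmAx Δ φ) {ψ : Form} :
    Form.box (Form.neg (Form.neg ψ)) ∈ Δ ↔ Form.box ψ ∈ Δ := by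
  constructor
  · intro h
    have ha : axDN2 ψ ∈ Δ := km_mem_of_deriv hΔ (.ax (.dn2 ψ))
    exact km_mp_mem hΔ ha h
  · intro h
    have ha : axDN1 ψ ∈ Δ := km_mem_of_deriv hΔ (.ax (.dn1 ψ))
    exact km_mp_mem hΔ ha h

private lemma km_dia_mem (hΔ : Saturated KmAx Δ φ) {ψ : Form} :
    dia ψ ∈ Δ ↔ Form.box (Form.neg ψ) ∉ Δ :=
  km_neg_mem_iff hΔ

private lemma km_dia_neg_mem (hΔ : Saturated KmAx Δ φ) {ψ : Form} :
    dia (Form.neg ψ) ∈ Δ ↔ Form.box ψ ∉ Δ := by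
  have h1 : dia (Form.neg ψ) ∈ Δ ↔ Form.box (Form.neg (Form.neg ψ)) ∉ Δ :=
    km_neg_mem_iff hΔ
  rw [h1, not_iff_not]
  exact km_box_dn hΔ

private lemma km_conj_mem (hΔ : Saturated KmAx Δ φ) {α β : Form} :
    α.conj β ∈ Δ ↔ (α ∈ Δ ∧ β ∈ Δ) := by
  show Form.neg (α.imp (Form.neg β)) ∈ Δ ↔ _
  rw [km_neg_mem_iff hΔ, km_imp_mem_iff hΔ, km_neg_mem_iff hΔ]
  by_cases hα : α ∈ Δ <;> by_cases hβ : β ∈ Δ <;> simp [hα, hβ]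

private lemma km_disj_mem (hΔ : Saturated KmAx Δ φ) {α β : Form} :
    α.disj β ∈ Δ ↔ (α ∈ Δ ∨ β ∈ Δ) := by
  show (Form.neg α).imp β ∈ Δ ↔ _
  rw [km_imp_mem_iff hΔ, km_neg_mem_iff hΔ]
  by_cases hα : α ∈ Δ <;> by_cases hβ : β ∈ Δ <;> simp [hα, hβ]

/- ### Modal membership lemmas -/

private lemma km_mem_M2 (hΔ : Saturated KmAx Δ φ) {α β : Form}
    (h : Form.box β ∈ Δ) : Form.box (α.imp β) ∈ Δ := by
  have ha : (Form.box β).imp (Form.box (α.imp β)) ∈ Δ :=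
    km_mem_of_deriv hΔ (.ax (.m2 α β))
  exact km_mp_mem hΔ ha h

private lemma km_mem_M1 (hΔ : Saturated KmAx Δ φ) {α β : Form}
    (h : Form.box (Form.neg α) ∈ Δ) : Form.box (α.imp β) ∈ Δ := by
  have hn : Form.neg (dia α) ∈ Δ :=
    (km_neg_mem_iff hΔ).2 (fun hc => (km_neg_mem_iff hΔ).1 hc h)
  have ha : (Form.neg (dia α)).imp (Form.box (α.imp β)) ∈ Δ :=
    km_mem_of_deriv hΔ (.ax (.m1 α β))
  exact km_mp_mem hΔ ha hn

private lemma km_mem_M3' (hΔ : Saturated KmAx Δ φ) {α β : Form}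
    (h1 : dia α ∈ Δ ∨ dia (Form.neg α) ∈ Δ) (h2 : dia β ∈ Δ) :
    dia (α.imp β) ∈ Δ := by
  have hd : (dia α).disj (dia (Form.neg α)) ∈ Δ := (km_disj_mem hΔ).2 h1
  have ha : ((dia α).disj (dia (Form.neg α))).imp ((dia β).imp (dia (α.imp β))) ∈ Δ :=
    km_mem_of_deriv hΔ (.ax (.m3' α β))
  exact km_mp_mem hΔ (km_mp_mem hΔ ha hd) h2

private lemma km_mem_M4' (hΔ : Saturated KmAx Δ φ) {α β : Form}
    (h1 : dia (Form.neg β) ∈ Δ) (h2 : dia (Form.neg α) ∈ Δ) :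
    dia (α.imp β) ∈ Δ := by
  have ha : (dia (Form.neg β)).imp ((dia (Form.neg α)).imp (dia (α.imp β))) ∈ Δ :=
    km_mem_of_deriv hΔ (.ax (.m4' α β))
  exact km_mp_mem hΔ (km_mp_mem hΔ ha h1) h2

private lemma km_mem_K' (hΔ : Saturated KmAx Δ φ) {α β : Form}
    (h1 : dia α ∈ Δ) (h2 : Form.box (α.imp β) ∈ Δ) (h3 : Form.box α ∈ Δ) :
    Form.box β ∈ Δ := by
  have ha : (dia α).imp ((Form.box (α.imp β)).imp ((Form.box α).imp (Form.box β))) ∈ Δ :=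
    km_mem_of_deriv hΔ (.ax (.k' α β))
  exact km_mp_mem hΔ (km_mp_mem hΔ (km_mp_mem hΔ ha h1) h2) h3

private lemma km_mem_K1' (hΔ : Saturated KmAx Δ φ) {α β : Form}
    (h1 : dia (Form.neg β) ∈ Δ) (h2 : Form.box (α.imp β) ∈ Δ) (h3 : dia α ∈ Δ) :
    dia β ∈ Δ := by
  have ha : (dia (Form.neg β)).imp ((Form.box (α.imp β)).imp ((dia α).imp (dia β))) ∈ Δ :=
    km_mem_of_deriv hΔ (.ax (.k1' α β))
  exact km_mp_mem hΔ (km_mp_mem hΔ (km_mp_mem hΔ ha h1) h2) h3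

private lemma km_mem_K2' (hΔ : Saturated KmAx Δ φ) {α β : Form}
    (h1 : dia α ∈ Δ) (h2 : dia (α.imp β) ∈ Δ) (h3 : Form.box α ∈ Δ) :
    dia β ∈ Δ := by
  have ha : (dia α).imp ((dia (α.imp β)).imp ((Form.box α).imp (dia β))) ∈ Δ :=
    km_mem_of_deriv hΔ (.ax (.k2' α β))
  exact km_mp_mem hΔ (km_mp_mem hΔ (km_mp_mem hΔ ha h1) h2) h3

private lemma km_mem_I1 (hΔ : Saturated KmAx Δ φ) {α β : Form}
    (h1 : Form.box α ∈ Δ) (h2 : Form.box (Form.neg α) ∈ Δ) :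
    Form.box (α.imp β) ∈ Δ ∧ Form.box (Form.neg (α.imp β)) ∈ Δ := by
  have ha : axI1 α β ∈ Δ := km_mem_of_deriv hΔ (.ax (.i1 α β))
  exact (km_conj_mem hΔ).1 (km_mp_mem hΔ ha ((km_conj_mem hΔ).2 ⟨h1, h2⟩))

private lemma km_mem_I2 (hΔ : Saturated KmAx Δ φ) {α β : Form}
    (h1 : Form.box β ∈ Δ) (h2 : Form.box (Form.neg β) ∈ Δ) :
    Form.box (α.imp β) ∈ Δ ∧ Form.box (Form.neg (α.imp β)) ∈ Δ := by
  have ha : axI2 α β ∈ Δ := km_mem_of_deriv hΔ (.ax (.i2 α β))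
  exact (km_conj_mem hΔ).1 (km_mp_mem hΔ ha ((km_conj_mem hΔ).2 ⟨h1, h2⟩))

/- ### The canonical value -/

open Classical in
private noncomputable def kmCanonLtr (a b : Prop) : Ltr :=
  if a then (if b then Ltr.I else Ltr.T) else (if b then Ltr.F else Ltr.C)

open Classical in
private noncomputable def kmCanonV (Δ : Set Form) (α : Form) : V8 :=
  ⟨kmCanonLtr (Form.box α ∈ Δ) (Form.box (Form.neg α) ∈ Δ),
    if α ∈ Δ then true else false⟩

private lemma km_canonSpec_canonV (hΔ : Saturated KmAx Δ φ) (α : Form) :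
    CanonSpec Δ α (kmCanonV Δ α) := by
  have hdia : dia α ∈ Δ ↔ Form.box (Form.neg α) ∉ Δ := km_dia_mem hΔ
  have hdian : dia (Form.neg α) ∈ Δ ↔ Form.box α ∉ Δ := km_dia_neg_mem hΔ
  refine ⟨?_, ?_, ?_, ?_, ?_, ?_⟩
  · by_cases hα : α ∈ Δ <;> simp [kmCanonV, hα]
  · rw [km_neg_mem_iff hΔ]
    by_cases hα : α ∈ Δ <;> simp [kmCanonV, hα]
  · rw [hdia]
    by_cases ha : Form.box α ∈ Δ <;> by_cases hb : Form.box (Form.neg α) ∈ Δ <;>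
      simp [kmCanonV, kmCanonLtr, ha, hb]
  · rw [hdia, hdian]
    by_cases ha : Form.box α ∈ Δ <;> by_cases hb : Form.box (Form.neg α) ∈ Δ <;>
      simp [kmCanonV, kmCanonLtr, ha, hb]
  · rw [hdian]
    by_cases ha : Form.box α ∈ Δ <;> by_cases hb : Form.box (Form.neg α) ∈ Δ <;>
      simp [kmCanonV, kmCanonLtr, ha, hb]
  · by_cases ha : Form.box α ∈ Δ <;> by_cases hb : Form.box (Form.neg α) ∈ Δ <;>
      simp [kmCanonV, kmCanonLtr, ha, hb]

private lemma km_canonSpec_unique (hΔ : Saturated KmAx Δ φ) {α : Form} {x : V8}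
    (h : CanonSpec Δ α x) : x = kmCanonV Δ α := by
  obtain ⟨h1, _, h3, h4, h5, h6⟩ := h
  have hdia : dia α ∈ Δ ↔ Form.box (Form.neg α) ∉ Δ := km_dia_mem hΔ
  have hdian : dia (Form.neg α) ∈ Δ ↔ Form.box α ∉ Δ := km_dia_neg_mem hΔ
  have hs : x.sgn = (kmCanonV Δ α).sgn := by
    by_cases hα : α ∈ Δ
    · simp [kmCanonV, hα, h1.2 hα]
    · have : x.sgn ≠ true := fun hc => hα (h1.1 hc)
      simp [kmCanonV, hα, Bool.eq_false_iff.2 this]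
  have hl : x.ltr = (kmCanonV Δ α).ltr := by
    by_cases ha : Form.box α ∈ Δ <;> by_cases hb : Form.box (Form.neg α) ∈ Δ
    · rw [h6.2 ⟨ha, hb⟩]; simp [kmCanonV, kmCanonLtr, ha, hb]
    · rw [h3.2 ⟨ha, hdia.2 hb⟩]; simp [kmCanonV, kmCanonLtr, ha, hb]
    · rw [h5.2 ⟨hb, hdian.2 ha⟩]; simp [kmCanonV, kmCanonLtr, ha, hb]
    · rw [h4.2 ⟨hdia.2 hb, hdian.2 ha⟩]; simp [kmCanonV, kmCanonLtr, ha, hb]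
  cases x
  cases hs
  cases hl
  rfl

private lemma km_canonLtr_swap (a b : Prop) : kmCanonLtr b a = lneg (kmCanonLtr a b) := by
  by_cases ha : a <;> by_cases hb : b <;> simp [kmCanonLtr, lneg, ha, hb]

private lemma km_canon_imp_ltr (hΔ : Saturated KmAx Δ φ) (α β : Form) :
    kmCanonLtr (Form.box (α.imp β) ∈ Δ) (Form.box (Form.neg (α.imp β)) ∈ Δ) ∈
      limp (kmCanonLtr (Form.box α ∈ Δ) (Form.box (Form.neg α) ∈ Δ))
        (kmCanonLtr (Form.box β ∈ Δ) (Form.box (Form.neg β) ∈ Δ)) := by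
  have hdc : dia (α.imp β) ∈ Δ ↔ Form.box (Form.neg (α.imp β)) ∉ Δ := km_dia_mem hΔ
  by_cases ha1 : Form.box α ∈ Δ <;> by_cases hb1 : Form.box (Form.neg α) ∈ Δ <;>
    by_cases ha2 : Form.box β ∈ Δ <;> by_cases hb2 : Form.box (Form.neg β) ∈ Δ
  -- 1: a1 b1 a2 b2
  · obtain ⟨hc, hd⟩ := km_mem_I1 (β := β) hΔ ha1 hb1
    simp [kmCanonLtr, limp, ha1, hb1, hc, hd]
  -- 2: a1 b1 a2 ¬b2
  · obtain ⟨hc, hd⟩ := km_mem_I1 (β := β) hΔ ha1 hb1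
    simp [kmCanonLtr, limp, ha1, hb1, hc, hd]
  -- 3: a1 b1 ¬a2 b2
  · obtain ⟨hc, hd⟩ := km_mem_I1 (β := β) hΔ ha1 hb1
    simp [kmCanonLtr, limp, ha1, hb1, hc, hd]
  -- 4: a1 b1 ¬a2 ¬b2
  · obtain ⟨hc, hd⟩ := km_mem_I1 (β := β) hΔ ha1 hb1
    simp [kmCanonLtr, limp, ha1, hb1, hc, hd]
  -- 5: a1 ¬b1 a2 b2  (T, I)
  · obtain ⟨hc, hd⟩ := km_mem_I2 (α := α) hΔ ha2 hb2
    simp [kmCanonLtr, limp, ha1, hb1, ha2, hb2, hc, hd]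
  -- 6: a1 ¬b1 a2 ¬b2  (T→T = T)
  · have hc : Form.box (α.imp β) ∈ Δ := km_mem_M2 hΔ ha2
    have hd : Form.box (Form.neg (α.imp β)) ∉ Δ :=
      hdc.1 (km_mem_M3' hΔ (Or.inl ((km_dia_mem hΔ).2 hb1)) ((km_dia_mem hΔ).2 hb2))
    simp [kmCanonLtr, limp, ha1, hb1, ha2, hb2, hc, hd]
  -- 7: a1 ¬b1 ¬a2 b2  (T→F = F)
  · have hc : Form.box (α.imp β) ∉ Δ :=
      fun h => ha2 (km_mem_K' hΔ ((km_dia_mem hΔ).2 hb1) h ha1)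
    have hd : Form.box (Form.neg (α.imp β)) ∈ Δ := by
      by_contra hd
      exact (km_dia_mem hΔ).1
        (km_mem_K2' hΔ ((km_dia_mem hΔ).2 hb1) (hdc.2 hd) ha1) hb2
    simp [kmCanonLtr, limp, ha1, hb1, ha2, hb2, hc, hd]
  -- 8: a1 ¬b1 ¬a2 ¬b2  (T→C = C)
  · have hc : Form.box (α.imp β) ∉ Δ :=
      fun h => ha2 (km_mem_K' hΔ ((km_dia_mem hΔ).2 hb1) h ha1)
    have hd : Form.box (Form.neg (α.imp β)) ∉ Δ :=
      hdc.1 (km_mem_M3' hΔ (Or.inl ((km_dia_mem hΔ).2 hb1)) ((km_dia_mem hΔ).2 hb2))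
    simp [kmCanonLtr, limp, ha1, hb1, ha2, hb2, hc, hd]
  -- 9: ¬a1 b1 a2 b2  (F, I)
  · obtain ⟨hc, hd⟩ := km_mem_I2 (α := α) hΔ ha2 hb2
    simp [kmCanonLtr, limp, ha1, hb1, ha2, hb2, hc, hd]
  -- 10: ¬a1 b1 a2 ¬b2  (F→T = T)
  · have hc : Form.box (α.imp β) ∈ Δ := km_mem_M2 hΔ ha2
    have hd : Form.box (Form.neg (α.imp β)) ∉ Δ :=
      hdc.1 (km_mem_M3' hΔ (Or.inr ((km_dia_neg_mem hΔ).2 ha1)) ((km_dia_mem hΔ).2 hb2))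
    simp [kmCanonLtr, limp, ha1, hb1, ha2, hb2, hc, hd]
  -- 11: ¬a1 b1 ¬a2 b2  (F→F = T)
  · have hc : Form.box (α.imp β) ∈ Δ := km_mem_M1 hΔ hb1
    have hd : Form.box (Form.neg (α.imp β)) ∉ Δ :=
      hdc.1 (km_mem_M4' hΔ ((km_dia_neg_mem hΔ).2 ha2) ((km_dia_neg_mem hΔ).2 ha1))
    simp [kmCanonLtr, limp, ha1, hb1, ha2, hb2, hc, hd]
  -- 12: ¬a1 b1 ¬a2 ¬b2  (F→C = T)
  · have hc : Form.box (α.imp β) ∈ Δ := km_mem_M1 hΔ hb1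
    have hd : Form.box (Form.neg (α.imp β)) ∉ Δ :=
      hdc.1 (km_mem_M3' hΔ (Or.inr ((km_dia_neg_mem hΔ).2 ha1)) ((km_dia_mem hΔ).2 hb2))
    simp [kmCanonLtr, limp, ha1, hb1, ha2, hb2, hc, hd]
  -- 13: ¬a1 ¬b1 a2 b2  (C, I)
  · obtain ⟨hc, hd⟩ := km_mem_I2 (α := α) hΔ ha2 hb2
    simp [kmCanonLtr, limp, ha1, hb1, ha2, hb2, hc, hd]
  -- 14: ¬a1 ¬b1 a2 ¬b2  (C→T = T)
  · have hc : Form.box (α.imp β) ∈ Δ := km_mem_M2 hΔ ha2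
    have hd : Form.box (Form.neg (α.imp β)) ∉ Δ :=
      hdc.1 (km_mem_M3' hΔ (Or.inl ((km_dia_mem hΔ).2 hb1)) ((km_dia_mem hΔ).2 hb2))
    simp [kmCanonLtr, limp, ha1, hb1, ha2, hb2, hc, hd]
  -- 15: ¬a1 ¬b1 ¬a2 b2  (C→F = C)
  · have hc : Form.box (α.imp β) ∉ Δ :=
      fun h => (km_dia_mem hΔ).1
        (km_mem_K1' hΔ ((km_dia_neg_mem hΔ).2 ha2) h ((km_dia_mem hΔ).2 hb1)) hb2
    have hd : Form.box (Form.neg (α.imp β)) ∉ Δ :=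
      hdc.1 (km_mem_M4' hΔ ((km_dia_neg_mem hΔ).2 ha2) ((km_dia_neg_mem hΔ).2 ha1))
    simp [kmCanonLtr, limp, ha1, hb1, ha2, hb2, hc, hd]
  -- 16: ¬a1 ¬b1 ¬a2 ¬b2  (C→C ∈ {T,C})
  · have hd : Form.box (Form.neg (α.imp β)) ∉ Δ :=
      hdc.1 (km_mem_M3' hΔ (Or.inl ((km_dia_mem hΔ).2 hb1)) ((km_dia_mem hΔ).2 hb2))
    by_cases hc : Form.box (α.imp β) ∈ Δ <;>
      simp [kmCanonLtr, limp, ha1, hb1, ha2, hb2, hc, hd]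

private lemma km_V8ext {x y : V8} (h1 : x.ltr = y.ltr) (h2 : x.sgn = y.sgn) : x = y := by
  cases x; cases y; cases h1; cases h2; rfl

end CanonAux

/-- The canonical valuation associated to a φ-saturated set Δ is well defined, is a
Km-valuation, and assigns designated values exactly to the members of Δ. -/
theorem Km_canonical_valuation (Δ : Set Form) (φ : Form)
    (hΔ : Saturated KmAx Δ φ) :
    (∀ α : Form, ∃! x : V8, CanonSpec Δ α x) ∧
    (∀ V : Form → V8, (∀ α, CanonSpec Δ α (V α)) →
      IsVal8 box8Km V ∧ (∀ α, (V α).desig ↔ α ∈ Δ)) := by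
  classical
  have huniq : ∀ α : Form, ∃! x : V8, CanonSpec Δ α x := fun α =>
    ⟨kmCanonV Δ α, km_canonSpec_canonV hΔ α, fun _ hy => km_canonSpec_unique hΔ hy⟩
  refine ⟨huniq, ?_⟩
  intro V hV
  have hE : ∀ α, V α = kmCanonV Δ α := fun α => km_canonSpec_unique hΔ (hV α)
  have hsgn : ∀ α, (V α).sgn = true ↔ α ∈ Δ := fun α => (hV α).1
  constructor
  · refine ⟨?_, ?_, ?_⟩
    · -- negation
      intro α
      have h1 : (V (Form.neg α)).ltr = lneg (V α).ltr := by
        rw [hE, hE]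
        show kmCanonLtr (Form.box (Form.neg α) ∈ Δ)
            (Form.box (Form.neg (Form.neg α)) ∈ Δ) = _
        rw [show (Form.box (Form.neg (Form.neg α)) ∈ Δ) = (Form.box α ∈ Δ) from
          propext (km_box_dn hΔ)]
        exact km_canonLtr_swap _ _
      have h2 : (V (Form.neg α)).sgn = !(V α).sgn := by
        by_cases hα : α ∈ Δ
        · have hn : Form.neg α ∉ Δ := fun h => (km_neg_mem_iff hΔ).1 h hα
          simp [hE, kmCanonV, hα, hn]
        · have hn : Form.neg α ∈ Δ := (km_neg_mem_iff hΔ).2 hα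
          simp [hE, kmCanonV, hα, hn]
      show V (Form.neg α) ∈ ({⟨lneg (V α).ltr, !(V α).sgn⟩} : Set V8)
      rw [Set.mem_singleton_iff]
      exact km_V8ext h1 h2
    · -- implication
      intro α β
      have hl : (V (α.imp β)).ltr ∈ limp (V α).ltr (V β).ltr := by
        rw [hE, hE, hE]
        exact km_canon_imp_ltr hΔ α β
      have hs : (V (α.imp β)).sgn = (!(V α).sgn || (V β).sgn) := by
        by_cases hα : α ∈ Δ <;> by_cases hβ : β ∈ Δ
        · have hi : α.imp β ∈ Δ := (km_imp_mem_iff hΔ).2 (Or.inr hβ)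
          simp [hE, kmCanonV, hα, hβ, hi]
        · have hi : α.imp β ∉ Δ := fun h =>
            ((km_imp_mem_iff hΔ).1 h).elim (fun h' => h' hα) hβ
          simp [hE, kmCanonV, hα, hβ, hi]
        · have hi : α.imp β ∈ Δ := (km_imp_mem_iff hΔ).2 (Or.inr hβ)
          simp [hE, kmCanonV, hα, hβ, hi]
        · have hi : α.imp β ∈ Δ := (km_imp_mem_iff hΔ).2 (Or.inl hα)
          simp [hE, kmCanonV, hα, hβ, hi]
      exact ⟨hl, hs⟩
    · -- box
      intro α
      by_cases ha : Form.box α ∈ Δ <;> by_cases hb : Form.box (Form.neg α) ∈ Δ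
      · have hl : (V α).ltr = Ltr.I := by rw [hE]; simp [kmCanonV, kmCanonLtr, ha, hb]
        simp only [box8Km, hl, Set.mem_setOf_eq]
        exact (hsgn _).2 ha
      · have hl : (V α).ltr = Ltr.T := by rw [hE]; simp [kmCanonV, kmCanonLtr, ha, hb]
        simp only [box8Km, hl, Set.mem_setOf_eq]
        exact (hsgn _).2 ha
      · have hl : (V α).ltr = Ltr.F := by rw [hE]; simp [kmCanonV, kmCanonLtr, ha, hb]
        have hcond : ¬((V α).ltr = Ltr.T ∨ (V α).ltr = Ltr.I) := by
          rw [hl]; rintro (h | h) <;> exact Ltr.noConfusion h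
        simp only [box8Km, if_neg hcond, Set.mem_setOf_eq]
        exact Bool.eq_false_iff.2 (fun hc => ha ((hsgn _).1 hc))
      · have hl : (V α).ltr = Ltr.C := by rw [hE]; simp [kmCanonV, kmCanonLtr, ha, hb]
        have hcond : ¬((V α).ltr = Ltr.T ∨ (V α).ltr = Ltr.I) := by
          rw [hl]; rintro (h | h) <;> exact Ltr.noConfusion h
        simp only [box8Km, if_neg hcond, Set.mem_setOf_eq]
        exact Bool.eq_false_iff.2 (fun hc => ha ((hsgn _).1 hc))
  · intro α
    exact hsgn α
end

section
/- (Completeness of Km) For every set Γ of modal formulas and every modal formula α, if Γ ⊨_Km α (α is a semantic consequence of Γ over the eight-valued Nmatrix M_Km) then Γ ⊢_Km α. -/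
open Form

/- ## Auxiliary material for the completeness proof -/

section KmCompleteness

open Form Classical

/-- A handy tactic-free helper: derivations are monotone in the premise set. -/
lemma Deriv.mono {Ax : Form → Prop} {Γ Γ' : Set Form} (h : Γ ⊆ Γ') {φ : Form}
    (d : Deriv Ax Γ φ) : Deriv Ax Γ' φ := by
  induction d with
  | prem hp => exact .prem (h hp)
  | ax ha => exact .ax ha
  | mp _ _ ih1 ih2 => exact .mp ih1 ih2

/-- Derivation from a tautology. -/
lemma kdTaut {Γ : Set Form} {φ : Form} (h : Taut φ) : Deriv KmAx Γ φ := .ax (.pc h)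

lemma taut_id (a : Form) : Taut (a.imp a) := by
  intro v hn hi; simp only [hi]; cases v a <;> simp

lemma taut_k (a b : Form) : Taut (a.imp (b.imp a)) := by
  intro v hn hi; simp only [hi]; cases v a <;> cases v b <;> simp

lemma taut_s (a b c : Form) :
    Taut ((a.imp (b.imp c)).imp ((a.imp b).imp (a.imp c))) := by
  intro v hn hi; simp only [hi]; cases v a <;> cases v b <;> cases v c <;> simp

lemma taut_exfalso (a b : Form) : Taut (a.imp ((Form.neg a).imp b)) := by
  intro v hn hi; simp only [hi, hn]; cases v a <;> cases v b <;> simp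

lemma taut_negimp (a b : Form) : Taut ((Form.neg a).imp (a.imp b)) := by
  intro v hn hi; simp only [hi, hn]; cases v a <;> cases v b <;> simp

lemma taut_cases (a b : Form) :
    Taut ((a.imp b).imp (((Form.neg a).imp b).imp b)) := by
  intro v hn hi; simp only [hi, hn]; cases v a <;> cases v b <;> simp

/-- Deduction theorem for `Deriv KmAx`. -/
lemma deduction {Γ : Set Form} {φ ψ : Form}
    (h : Deriv KmAx (insert φ Γ) ψ) : Deriv KmAx Γ (φ.imp ψ) := by
  induction h with
  | @prem χ hp =>
    rcases hp with rfl | hp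
    · exact kdTaut (taut_id _)
    · exact .mp (kdTaut (taut_k χ φ)) (.prem hp)
  | @ax χ ha => exact .mp (kdTaut (taut_k χ φ)) (.ax ha)
  | @mp χ ψ' _ _ ih1 ih2 =>
    exact .mp (.mp (kdTaut (taut_s φ χ ψ')) ih1) ih2

/-- Δ is maximal among sets not deriving α. -/
def MaxAvoid (Δ : Set Form) (α : Form) : Prop :=
  ¬ Deriv KmAx Δ α ∧ ∀ φ, φ ∉ Δ → Deriv KmAx (insert φ Δ) α

lemma deriv_sUnion {c : Set (Set Form)} (hc : IsChain (· ⊆ ·) c) (hne : c.Nonempty)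
    {φ : Form} (h : Deriv KmAx (⋃₀ c) φ) : ∃ Δ ∈ c, Deriv KmAx Δ φ := by
  induction h with
  | prem hp =>
    obtain ⟨Δ, hΔ, hφ⟩ := hp
    exact ⟨Δ, hΔ, .prem hφ⟩
  | ax ha =>
    obtain ⟨Δ, hΔ⟩ := hne
    exact ⟨Δ, hΔ, .ax ha⟩
  | mp _ _ ih1 ih2 =>
    obtain ⟨Δ₁, h₁, d₁⟩ := ih1
    obtain ⟨Δ₂, h₂, d₂⟩ := ih2
    rcases eq_or_ne Δ₁ Δ₂ with rfl | hne'
    · exact ⟨Δ₁, h₁, .mp d₁ d₂⟩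
    rcases hc h₁ h₂ hne' with hsub | hsub
    · exact ⟨Δ₂, h₂, .mp (d₁.mono hsub) d₂⟩
    · exact ⟨Δ₁, h₁, .mp d₁ (d₂.mono hsub)⟩

lemma lindenbaum {Γ : Set Form} {α : Form} (h : ¬ Deriv KmAx Γ α) :
    ∃ Δ, Γ ⊆ Δ ∧ MaxAvoid Δ α := by
  obtain ⟨Δ, hΓΔ, hmax⟩ := zorn_subset_nonempty {Δ | ¬ Deriv KmAx Δ α}
    (fun c hcS hchain hcne => by
      refine ⟨⋃₀ c, ?_, fun s hs => Set.subset_sUnion_of_mem hs⟩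
      intro hder
      obtain ⟨Δ, hΔ, hd⟩ := deriv_sUnion hchain hcne hder
      exact hcS hΔ hd) Γ h
  refine ⟨Δ, hΓΔ, hmax.prop, fun φ hφ => ?_⟩
  by_contra hder
  have := hmax.le_of_ge (y := insert φ Δ) hder (Set.subset_insert _ _)
  exact hφ (this (Set.mem_insert _ _))

variable {Δ : Set Form} {α : Form}

lemma MaxAvoid.mem_of_deriv (hΔ : MaxAvoid Δ α) {φ : Form}
    (h : Deriv KmAx Δ φ) : φ ∈ Δ := by
  by_contra hφ
  exact hΔ.1 (.mp (deduction (hΔ.2 φ hφ)) h)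

lemma MaxAvoid.neg_mem_iff (hΔ : MaxAvoid Δ α) {φ : Form} :
    Form.neg φ ∈ Δ ↔ φ ∉ Δ := by
  constructor
  · intro hn hp
    exact hΔ.1 (.mp (.mp (kdTaut (taut_exfalso φ α)) (.prem hp)) (.prem hn))
  · intro hp
    by_contra hn
    have d1 : Deriv KmAx Δ (φ.imp α) := deduction (hΔ.2 φ hp)
    have d2 : Deriv KmAx Δ ((Form.neg φ).imp α) := deduction (hΔ.2 _ hn)
    exact hΔ.1 (.mp (.mp (kdTaut (taut_cases φ α)) d1) d2)

lemma MaxAvoid.imp_mem_iff (hΔ : MaxAvoid Δ α) {φ ψ : Form} :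
    φ.imp ψ ∈ Δ ↔ (φ ∈ Δ → ψ ∈ Δ) := by
  constructor
  · intro hi hp
    exact hΔ.mem_of_deriv (.mp (.prem hi) (.prem hp))
  · intro h
    by_cases hp : φ ∈ Δ
    · exact hΔ.mem_of_deriv (.mp (kdTaut (taut_k ψ φ)) (.prem (h hp)))
    · have : Form.neg φ ∈ Δ := hΔ.neg_mem_iff.2 hp
      exact hΔ.mem_of_deriv (.mp (kdTaut (taut_negimp φ ψ)) (.prem this))

lemma MaxAvoid.negneg_mem_iff (hΔ : MaxAvoid Δ α) {φ : Form} :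
    Form.neg (Form.neg φ) ∈ Δ ↔ φ ∈ Δ := by
  rw [hΔ.neg_mem_iff, hΔ.neg_mem_iff]; exact not_not

lemma MaxAvoid.dia_mem_iff (hΔ : MaxAvoid Δ α) {φ : Form} :
    dia φ ∈ Δ ↔ box (Form.neg φ) ∉ Δ := hΔ.neg_mem_iff

lemma MaxAvoid.conj_mem_iff (hΔ : MaxAvoid Δ α) {φ ψ : Form} :
    φ.conj ψ ∈ Δ ↔ (φ ∈ Δ ∧ ψ ∈ Δ) := by
  rw [Form.conj, hΔ.neg_mem_iff, hΔ.imp_mem_iff, hΔ.neg_mem_iff]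
  tauto

/-- Membership of an axiom instance. -/
lemma MaxAvoid.ax_mem (hΔ : MaxAvoid Δ α) {φ : Form} (h : KmAx φ) : φ ∈ Δ :=
  hΔ.mem_of_deriv (.ax h)

/-- Double-negation transfer under box. -/
lemma MaxAvoid.box_negneg_iff (hΔ : MaxAvoid Δ α) {φ : Form} :
    box (Form.neg (Form.neg φ)) ∈ Δ ↔ box φ ∈ Δ := by
  constructor
  · intro h
    exact (hΔ.imp_mem_iff.1 (hΔ.ax_mem (KmAx.dn2 φ))) h
  · intro h
    exact (hΔ.imp_mem_iff.1 (hΔ.ax_mem (KmAx.dn1 φ))) h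

/-- The canonical letter of a formula. -/
noncomputable def ltrOf (Δ : Set Form) (φ : Form) : Ltr :=
  if box φ ∈ Δ then (if box (Form.neg φ) ∈ Δ then Ltr.I else Ltr.T)
  else (if box (Form.neg φ) ∈ Δ then Ltr.F else Ltr.C)

/-- The canonical valuation. -/
noncomputable def canVal (Δ : Set Form) (φ : Form) : V8 :=
  ⟨ltrOf Δ φ, if φ ∈ Δ then true else false⟩

lemma canVal_sgn (Δ : Set Form) (φ : Form) :
    (canVal Δ φ).sgn = true ↔ φ ∈ Δ := by
  by_cases h : φ ∈ Δ <;> simp [canVal, h]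

/- modal membership facts -/

section ModalFacts

lemma factI1 (hΔ : MaxAvoid Δ α) (φ ψ : Form) (ha : box φ ∈ Δ) (ha' : box (Form.neg φ) ∈ Δ) :
    box (φ.imp ψ) ∈ Δ ∧ box (Form.neg (φ.imp ψ)) ∈ Δ := by
  have := hΔ.imp_mem_iff.1 (hΔ.ax_mem (KmAx.i1 φ ψ))
  exact hΔ.conj_mem_iff.1 (this (hΔ.conj_mem_iff.2 ⟨ha, ha'⟩))

lemma factI2 (hΔ : MaxAvoid Δ α) (φ ψ : Form)  (hb : box ψ ∈ Δ) (hb' : box (Form.neg ψ) ∈ Δ) :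
    box (φ.imp ψ) ∈ Δ ∧ box (Form.neg (φ.imp ψ)) ∈ Δ := by
  have := hΔ.imp_mem_iff.1 (hΔ.ax_mem (KmAx.i2 φ ψ))
  exact hΔ.conj_mem_iff.1 (this (hΔ.conj_mem_iff.2 ⟨hb, hb'⟩))

/-- (M2): □ψ gives □(φ→ψ). -/
lemma factM2 (hΔ : MaxAvoid Δ α) (φ ψ : Form)  (hb : box ψ ∈ Δ) : box (φ.imp ψ) ∈ Δ :=
  hΔ.imp_mem_iff.1 (hΔ.ax_mem (KmAx.m2 φ ψ)) hb

/-- (M1): □¬φ gives □(φ→ψ). -/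
lemma factM1 (hΔ : MaxAvoid Δ α) (φ ψ : Form)  (ha' : box (Form.neg φ) ∈ Δ) : box (φ.imp ψ) ∈ Δ := by
  have hnd : Form.neg (dia φ) ∈ Δ := by
    rw [hΔ.neg_mem_iff, hΔ.dia_mem_iff]; exact fun h => h ha'
  exact hΔ.imp_mem_iff.1 (hΔ.ax_mem (KmAx.m1 φ ψ)) hnd

/-- (M3'), ◇φ branch: ◇φ and ◇ψ give ◇(φ→ψ), i.e. ¬c'. -/
lemma factM3a (hΔ : MaxAvoid Δ α) (φ ψ : Form)  (ha' : box (Form.neg φ) ∉ Δ) (hb' : box (Form.neg ψ) ∉ Δ) :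
    box (Form.neg (φ.imp ψ)) ∉ Δ := by
  have hdφ : dia φ ∈ Δ := hΔ.dia_mem_iff.2 ha'
  have hd : (dia φ).disj (dia (Form.neg φ)) ∈ Δ := by
    rw [Form.disj, hΔ.imp_mem_iff]
    intro hn
    exact absurd hdφ (hΔ.neg_mem_iff.1 hn)
  have h1 := hΔ.imp_mem_iff.1 (hΔ.ax_mem (KmAx.m3' φ ψ)) hd
  have h2 := hΔ.imp_mem_iff.1 h1 (hΔ.dia_mem_iff.2 hb')
  exact hΔ.dia_mem_iff.1 h2

/-- (M3'), ◇¬φ branch: ¬□φ and ◇ψ give ◇(φ→ψ). -/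
lemma factM3b (hΔ : MaxAvoid Δ α) (φ ψ : Form)  (ha : box φ ∉ Δ) (hb' : box (Form.neg ψ) ∉ Δ) :
    box (Form.neg (φ.imp ψ)) ∉ Δ := by
  have hdn : dia (Form.neg φ) ∈ Δ := by
    rw [hΔ.dia_mem_iff, hΔ.box_negneg_iff]; exact ha
  have hd : (dia φ).disj (dia (Form.neg φ)) ∈ Δ := by
    rw [Form.disj, hΔ.imp_mem_iff]; exact fun _ => hdn
  have h1 := hΔ.imp_mem_iff.1 (hΔ.ax_mem (KmAx.m3' φ ψ)) hd
  have h2 := hΔ.imp_mem_iff.1 h1 (hΔ.dia_mem_iff.2 hb')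
  exact hΔ.dia_mem_iff.1 h2

/-- (M4'): ¬□ψ and ¬□φ give ◇(φ→ψ). -/
lemma factM4 (hΔ : MaxAvoid Δ α) (φ ψ : Form)  (ha : box φ ∉ Δ) (hb : box ψ ∉ Δ) :
    box (Form.neg (φ.imp ψ)) ∉ Δ := by
  have hdnψ : dia (Form.neg ψ) ∈ Δ := by
    rw [hΔ.dia_mem_iff, hΔ.box_negneg_iff]; exact hb
  have hdnφ : dia (Form.neg φ) ∈ Δ := by
    rw [hΔ.dia_mem_iff, hΔ.box_negneg_iff]; exact ha
  have h1 := hΔ.imp_mem_iff.1 (hΔ.ax_mem (KmAx.m4' φ ψ)) hdnψ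
  exact hΔ.dia_mem_iff.1 (hΔ.imp_mem_iff.1 h1 hdnφ)

/-- (K'): ◇φ, □φ, ¬□ψ give ¬□(φ→ψ). -/
lemma factK (hΔ : MaxAvoid Δ α) (φ ψ : Form) (ha' : box (Form.neg φ) ∉ Δ) (ha : box φ ∈ Δ) (hb : box ψ ∉ Δ) :
    box (φ.imp ψ) ∉ Δ := by
  intro hc
  have h1 := hΔ.imp_mem_iff.1 (hΔ.ax_mem (KmAx.k' φ ψ)) (hΔ.dia_mem_iff.2 ha')
  exact hb (hΔ.imp_mem_iff.1 (hΔ.imp_mem_iff.1 h1 hc) ha)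

/-- (K1'): ◇¬ψ, ◇φ, □¬ψ give ¬□(φ→ψ). -/
lemma factK1 (hΔ : MaxAvoid Δ α) (φ ψ : Form) (hb : box ψ ∉ Δ) (ha' : box (Form.neg φ) ∉ Δ)
    (hb' : box (Form.neg ψ) ∈ Δ) : box (φ.imp ψ) ∉ Δ := by
  intro hc
  have hdnψ : dia (Form.neg ψ) ∈ Δ := by
    rw [hΔ.dia_mem_iff, hΔ.box_negneg_iff]; exact hb
  have h1 := hΔ.imp_mem_iff.1 (hΔ.ax_mem (KmAx.k1' φ ψ)) hdnψ
  have h2 := hΔ.imp_mem_iff.1 (hΔ.imp_mem_iff.1 h1 hc) (hΔ.dia_mem_iff.2 ha')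
  exact (hΔ.dia_mem_iff.1 h2) hb'

/-- (K2'): ◇φ, □φ, □¬ψ give □¬(φ→ψ). -/
lemma factK2 (hΔ : MaxAvoid Δ α) (φ ψ : Form) (ha' : box (Form.neg φ) ∉ Δ) (ha : box φ ∈ Δ)
    (hb' : box (Form.neg ψ) ∈ Δ) : box (Form.neg (φ.imp ψ)) ∈ Δ := by
  by_contra hc'
  have h1 := hΔ.imp_mem_iff.1 (hΔ.ax_mem (KmAx.k2' φ ψ)) (hΔ.dia_mem_iff.2 ha')
  have h2 := hΔ.imp_mem_iff.1 (hΔ.imp_mem_iff.1 h1 (hΔ.dia_mem_iff.2 hc')) ha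
  exact (hΔ.dia_mem_iff.1 h2) hb'

end ModalFacts

/-- The letter of an implication is admissible. -/
lemma ltr_imp (hΔ : MaxAvoid Δ α) (φ ψ : Form) :
    ltrOf Δ (φ.imp ψ) ∈ limp (ltrOf Δ φ) (ltrOf Δ ψ) := by
  by_cases ha : box φ ∈ Δ <;> by_cases ha' : box (Form.neg φ) ∈ Δ <;>
    by_cases hb : box ψ ∈ Δ <;> by_cases hb' : box (Form.neg ψ) ∈ Δ
  -- φ = I (4 cases)
  · obtain ⟨hc, hc'⟩ := factI1 hΔ φ ψ ha ha'
    simp [ltrOf, ha, ha', hb, hb', hc, hc', limp]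
  · obtain ⟨hc, hc'⟩ := factI1 hΔ φ ψ ha ha'
    simp [ltrOf, ha, ha', hb, hb', hc, hc', limp]
  · obtain ⟨hc, hc'⟩ := factI1 hΔ φ ψ ha ha'
    simp [ltrOf, ha, ha', hb, hb', hc, hc', limp]
  · obtain ⟨hc, hc'⟩ := factI1 hΔ φ ψ ha ha'
    simp [ltrOf, ha, ha', hb, hb', hc, hc', limp]
  -- φ = T, ψ = I
  · obtain ⟨hc, hc'⟩ := factI2 hΔ φ ψ hb hb'
    simp [ltrOf, ha, ha', hb, hb', hc, hc', limp]
  -- T, T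
  · have hc := factM2 hΔ φ ψ hb
    have hc' := factM3a hΔ φ ψ ha' hb'
    simp [ltrOf, ha, ha', hb, hb', hc, hc', limp]
  -- T, F
  · have hc := factK1 hΔ φ ψ hb ha' hb'
    have hc' := factK2 hΔ φ ψ ha' ha hb'
    simp [ltrOf, ha, ha', hb, hb', hc, hc', limp]
  -- T, C
  · have hc := factK hΔ φ ψ ha' ha hb
    have hc' := factM3a hΔ φ ψ ha' hb'
    simp [ltrOf, ha, ha', hb, hb', hc, hc', limp]
  -- φ = F, ψ = I
  · obtain ⟨hc, hc'⟩ := factI2 hΔ φ ψ hb hb'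
    simp [ltrOf, ha, ha', hb, hb', hc, hc', limp]
  -- F, T
  · have hc := factM1 hΔ φ ψ ha'
    have hc' := factM3b hΔ φ ψ ha hb'
    simp [ltrOf, ha, ha', hb, hb', hc, hc', limp]
  -- F, F
  · have hc := factM1 hΔ φ ψ ha'
    have hc' := factM4 hΔ φ ψ ha hb
    simp [ltrOf, ha, ha', hb, hb', hc, hc', limp]
  -- F, C
  · have hc := factM1 hΔ φ ψ ha'
    have hc' := factM3b hΔ φ ψ ha hb'
    simp [ltrOf, ha, ha', hb, hb', hc, hc', limp]
  -- φ = C, ψ = I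
  · obtain ⟨hc, hc'⟩ := factI2 hΔ φ ψ hb hb'
    simp [ltrOf, ha, ha', hb, hb', hc, hc', limp]
  -- C, T
  · have hc := factM2 hΔ φ ψ hb
    have hc' := factM3a hΔ φ ψ ha' hb'
    simp [ltrOf, ha, ha', hb, hb', hc, hc', limp]
  -- C, F
  · have hc := factK1 hΔ φ ψ hb ha' hb'
    have hc' := factM4 hΔ φ ψ ha hb
    simp [ltrOf, ha, ha', hb, hb', hc, hc', limp]
  -- C, C
  · have hc' := factM3a hΔ φ ψ ha' hb'
    by_cases hc : box (φ.imp ψ) ∈ Δ <;>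
      simp [ltrOf, ha, ha', hb, hb', hc, hc', limp]

lemma canVal_isVal (hΔ : MaxAvoid Δ α) : IsVal8 box8Km (canVal Δ) := by
  refine ⟨fun φ => ?_, fun φ ψ => ?_, fun φ => ?_⟩
  · -- negation
    have hl : ltrOf Δ (Form.neg φ) = lneg (ltrOf Δ φ) := by
      have hbn : box (Form.neg (Form.neg φ)) ∈ Δ ↔ box φ ∈ Δ := hΔ.box_negneg_iff
      by_cases ha : box φ ∈ Δ <;> by_cases ha' : box (Form.neg φ) ∈ Δ <;>
        simp [ltrOf, ha, ha', hbn, lneg]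
    have hs : (if Form.neg φ ∈ Δ then true else false)
        = !(if φ ∈ Δ then true else false) := by
      by_cases h : φ ∈ Δ
      · have hn : Form.neg φ ∉ Δ := fun hn => (hΔ.neg_mem_iff.1 hn) h
        simp [h, hn]
      · have hn : Form.neg φ ∈ Δ := hΔ.neg_mem_iff.2 h
        simp [h, hn]
    simp only [neg8, canVal, Set.mem_singleton_iff]
    exact congrArg₂ V8.mk hl hs
  · -- implication
    refine ⟨ltr_imp hΔ φ ψ, ?_⟩
    show (if φ.imp ψ ∈ Δ then true else false)
        = (!(if φ ∈ Δ then true else false) || (if ψ ∈ Δ then true else false))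
    by_cases hp : φ ∈ Δ <;> by_cases hq : ψ ∈ Δ
    · have : φ.imp ψ ∈ Δ := hΔ.imp_mem_iff.2 (fun _ => hq)
      simp [hp, hq, this]
    · have : φ.imp ψ ∉ Δ := fun h => hq (hΔ.imp_mem_iff.1 h hp)
      simp [hp, hq, this]
    · have : φ.imp ψ ∈ Δ := hΔ.imp_mem_iff.2 (fun _ => hq)
      simp [hp, hq, this]
    · have : φ.imp ψ ∈ Δ := hΔ.imp_mem_iff.2 (fun h => absurd h hp)
      simp [hp, hq, this]
  · -- box
    by_cases ha : box φ ∈ Δ <;> by_cases ha' : box (Form.neg φ) ∈ Δ <;>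
      simp [box8Km, canVal, ltrOf, ha, ha']

end KmCompleteness

/-- Completeness of Km with respect to the eight-valued Nmatrix M_Km. -/
theorem Km_completeness (Γ : Set Form) (α : Form) :
    NmEntails box8Km Γ α → Deriv KmAx Γ α := by
  intro h
  by_contra hder
  obtain ⟨Δ, hΓΔ, hΔ⟩ := lindenbaum hder
  have hdes : (canVal Δ α).desig := h (canVal Δ) (canVal_isVal hΔ)
    (fun γ hγ => (canVal_sgn Δ γ).2 (hΓΔ hγ))
  exact hΔ.1 (.prem ((canVal_sgn Δ α).1 hdes))
end

section
/- (Compactness of the Nmatrix semantics for Km) For every set Γ of modal formulas and every modal formula α, if Γ ⊨_Km α then there exists a finite subset Γ₀ of Γ such that Γ₀ ⊨_Km α. -/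
open Form

/-! Give `V8` the discrete topology, so that `Form → V8` is compact (Tychonoff). Each clause of
being a valuation constrains finitely many coordinates, so the valuations refuting `α` form a
compact set, and `Γ ⊨ α` says that it misses the intersection of the closed sets
`{v | v γ ∈ +}`, `γ ∈ Γ`. By the finite intersection property finitely many of them suffice. -/

instance : Finite Ltr :=
  Finite.of_surjective (fun i : Fin 4 => ![Ltr.T, Ltr.C, Ltr.F, Ltr.I] i) fun x => by
    cases x
    exacts [⟨0, rfl⟩, ⟨1, rfl⟩, ⟨2, rfl⟩, ⟨3, rfl⟩]

instance : Finite V8 :=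
  Finite.of_surjective (fun p : Ltr × Bool => ⟨p.1, p.2⟩) fun x => ⟨(x.ltr, x.sgn), rfl⟩

instance : TopologicalSpace V8 := ⊥

instance : DiscreteTopology V8 := ⟨rfl⟩

theorem isClosed_setOf_isVal8 (boxOp : V8 → Set V8) :
    IsClosed {v : Form → V8 | IsVal8 boxOp v} := by
  have hneg (φ : Form) : IsClosed {v : Form → V8 | v φ.neg ∈ neg8 (v φ)} :=
    (isClosed_discrete {x : V8 × V8 | x.1 ∈ neg8 x.2}).preimage
      (f := fun v : Form → V8 => (v φ.neg, v φ)) (by fun_prop)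
  have himp (φ ψ : Form) : IsClosed {v : Form → V8 | v (φ.imp ψ) ∈ imp8 (v φ) (v ψ)} :=
    (isClosed_discrete {x : V8 × V8 × V8 | x.1 ∈ imp8 x.2.1 x.2.2}).preimage
      (f := fun v : Form → V8 => (v (φ.imp ψ), v φ, v ψ)) (by fun_prop)
  have hbox (φ : Form) : IsClosed {v : Form → V8 | v φ.box ∈ boxOp (v φ)} :=
    (isClosed_discrete {x : V8 × V8 | x.1 ∈ boxOp x.2}).preimage
      (f := fun v : Form → V8 => (v φ.box, v φ)) (by fun_prop)
  simp only [IsVal8, Set.ofPred_and, Set.ofPred_forall]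
  exact (isClosed_iInter hneg).inter
    ((isClosed_iInter fun φ => isClosed_iInter (himp φ)).inter (isClosed_iInter hbox))

theorem isClosed_setOf_apply {ι X : Type*} [TopologicalSpace X] [DiscreteTopology X]
    (p : X → Prop) (i : ι) : IsClosed {v : ι → X | p (v i)} :=
  (isClosed_discrete {x | p x}).preimage (continuous_apply i)

theorem NmEntails.exists_finite {boxOp : V8 → Set V8} {Γ : Set Form} {α : Form}
    (h : NmEntails boxOp Γ α) :
    ∃ Γ₀ : Set Form, Γ₀ ⊆ Γ ∧ Γ₀.Finite ∧ NmEntails boxOp Γ₀ α := by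
  let refuters : Set (Form → V8) := {v | IsVal8 boxOp v} ∩ {v | ¬(v α).desig}
  have hcompact : IsCompact refuters :=
    ((isClosed_setOf_isVal8 boxOp).inter (isClosed_setOf_apply (fun x => ¬x.desig) α)).isCompact
  have hno_refuter : refuters ∩ ⋂ γ : Γ, {v | (v γ).desig} = ∅ :=
    Set.eq_empty_iff_forall_notMem.2 fun v ⟨⟨hv, hα⟩, hΓ⟩ =>
      hα (h v hv fun γ hγ => Set.mem_iInter.1 hΓ ⟨γ, hγ⟩)
  obtain ⟨u, hu⟩ := hcompact.elim_finite_subfamily_closed _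
    (fun γ : Γ => isClosed_setOf_apply V8.desig (γ : Form)) hno_refuter
  refine ⟨Subtype.val '' (u : Set Γ), by simp, u.finite_toSet.image _, fun v hv hΓ₀ => ?_⟩
  by_contra hα
  exact hu.subset ⟨⟨hv, hα⟩, Set.mem_iInter₂.2 fun γ hγ => hΓ₀ γ ⟨γ, hγ, rfl⟩⟩

/-- Compactness of the Nmatrix semantics for Km. -/
theorem Km_compactness (Γ : Set Form) (α : Form) (h : NmEntails box8Km Γ α) :
    ∃ Γ₀ : Set Form, Γ₀ ⊆ Γ ∧ Γ₀.Finite ∧ NmEntails box8Km Γ₀ α :=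
  h.exists_finite
end
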